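/- Let V be a vertex algebra and M a subspace with C₂(V) ⊆ M. Then for a ∈ V: (1) a ∈ r_{0,-1}(M) iff a + C₂(V) ∈ r(M/C₂(V)); (2) a ∈ sr_{0,-1}(M) iff a + C₂(V) ∈ sr(M/C₂(V)). Consequently, M is a MZ_{0,-1}-subspace of V if and only if M/C₂(V) is a Mathieu-Zhao subspace of the commutative associative algebra V/C₂(V). -/

import Mathlib

/-
Modulo `C₂(V)` every mode `u_n` with `n ≤ -2` vanishes (since `(𝒟u)_{n} = -n u_{n-1}`), `C₂(V)`
is stable under all modes `u_n`, `n ≤ 0`, on either side, skew symmetry identifies `u_n v` with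
`± v_n u`, and the `(-1)`-product is commutative. Moreover `b_0` is a derivation of the
`(-1)`-product, so `b_0 a^{t+1} ≡ (t+1) (b_0 a)_{-1} a^t`; with `b = a` and `a_0 a ∈ C₂(V)` this
puts every word `a_{n₁} ⋯ a_{n_t} a` with indices in `{0, -1}` containing a `0` into `C₂(V)`,
while the remaining words are the powers `a^{t+1}`. Hence for `M ⊇ C₂(V)` the conditions
defining `r_{0,-1}(M)` and `sr_{0,-1}(M)` only involve powers of `a`, and the condition on
`b_0 a^t` follows from the one on `(b_0 a)_{-1} a^t`.
-/

open scoped BigOperators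

noncomputable section

/-- The generalized binomial coefficient `p choose i` for `p : ℤ`, as a complex number. -/
def zchoose (p : ℤ) (i : ℕ) : ℂ :=
  (∏ j ∈ Finset.range i, ((p : ℂ) - (j : ℂ))) / (i.factorial : ℂ)

/-- A vertex algebra over `ℂ`: a bilinear system of modes `u ↦ u_n`, a vacuum vector `𝟙`,
truncation, vacuum/creation axioms and the Borcherds (Jacobi) identity. -/
structure VertexAlgebra (V : Type) [AddCommGroup V] [Module ℂ V] where
  mode : V → ℤ → V → V
  one : V
  mode_add_left : ∀ (u v : V) (n : ℤ) (w : V), mode (u + v) n w = mode u n w + mode v n w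
  mode_smul_left : ∀ (c : ℂ) (u : V) (n : ℤ) (w : V), mode (c • u) n w = c • mode u n w
  mode_add_right : ∀ (u : V) (n : ℤ) (v w : V), mode u n (v + w) = mode u n v + mode u n w
  mode_smul_right : ∀ (u : V) (n : ℤ) (c : ℂ) (v : V), mode u n (c • v) = c • mode u n v
  trunc : ∀ u v : V, ∃ N : ℤ, ∀ n ≥ N, mode u n v = 0
  vacuum_left : ∀ (n : ℤ) (v : V), mode one n v = if n = -1 then v else 0
  creation_nonneg : ∀ (u : V) (n : ℤ), 0 ≤ n → mode u n one = 0
  creation : ∀ u : V, mode u (-1) one = u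
  borcherds : ∀ (u v w : V) (p q r : ℤ),
    ∑ᶠ i : ℕ, zchoose p i • mode (mode u (r + i) v) (p + q - i) w =
      ∑ᶠ i : ℕ, ((-1 : ℂ) ^ i * zchoose r i) •
        (mode u (p + r - i) (mode v (q + i) w) -
          ((-1 : ℂ) ^ r) • mode v (q + r - i) (mode u (p + i) w))

/-- A list of mode indices all equal to `0` or `-1`. -/
def GoodIdx (ns : List ℤ) : Prop := ∀ n ∈ ns, n = 0 ∨ n = -1

namespace VertexAlgebra

variable {V : Type} [AddCommGroup V] [Module ℂ V] (VA : VertexAlgebra V)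

/-- The translation operator `𝒟 v = v_{-2} 𝟙`. -/
def D (v : V) : V := VA.mode v (-2) VA.one

/-- `C₂(V) = span_ℂ { u_{-2} v }`. -/
def C2 : Submodule ℂ V := Submodule.span ℂ {w : V | ∃ u v : V, w = VA.mode u (-2) v}

/-- `Cₙ(V) = span_ℂ { u_{-n} v }`. -/
def Cn (n : ℕ) : Submodule ℂ V :=
  Submodule.span ℂ {w : V | ∃ u v : V, w = VA.mode u (-(n : ℤ)) v}

/-- The iterated word `a_{n₁} a_{n₂} ⋯ a_{n_t} a`. -/
def word (a : V) (ns : List ℤ) : V := ns.foldr (fun n acc => VA.mode a n acc) a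

/-- The radical `r_{0,-1}(M)` of a subspace `M` with respect to the 0-th and (-1)-th products. -/
def rad (M : Set V) : Set V :=
  {v : V | ∃ m : ℕ, ∀ ns : List ℤ, GoodIdx ns → m ≤ ns.length → VA.word v ns ∈ M}

/-- The left-strong radical `lsr_{0,-1}(M)`. -/
def lsrad (M : Set V) : Set V :=
  {v : V | ∀ b : V, ∃ m : ℕ, ∀ (ns : List ℤ) (s : ℤ), GoodIdx ns → m ≤ ns.length →
    (s = 0 ∨ s = -1) → VA.mode b s (VA.word v ns) ∈ M}

/-- The right-strong radical `rsr_{0,-1}(M)`. -/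
def rsrad (M : Set V) : Set V :=
  {v : V | ∀ w : V, ∃ m : ℕ, ∀ (ns : List ℤ) (s : ℤ), GoodIdx ns → m ≤ ns.length →
    (s = 0 ∨ s = -1) → VA.mode (VA.word v ns) s w ∈ M}

/-- The strong radical `sr_{0,-1}(M) = lsr_{0,-1}(M) ∩ rsr_{0,-1}(M)`. -/
def srad (M : Set V) : Set V := VA.lsrad M ∩ VA.rsrad M

/-- `M` is a Mathieu-Zhao subspace of `V` with respect to the 0-th and (-1)-th products. -/
def IsMZ (M : Set V) : Prop := VA.rad M = VA.srad M

/-- A (two-sided) ideal of a vertex algebra. -/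
def IsIdeal (I : Submodule ℂ V) : Prop :=
  ∀ (v w : V) (n : ℤ), w ∈ I → VA.mode v n w ∈ I ∧ VA.mode w n v ∈ I

/-- `t`-th power of `a` under the (-1)-th product: `a_{-1}(a_{-1}(⋯ a))`, with `pow a 0 = 𝟙`. -/
def pow (a : V) (t : ℕ) : V :=
  Nat.rec VA.one (fun _ acc => VA.mode a (-1) acc) t

end VertexAlgebra

/-- A homomorphism of vertex algebras: a linear map preserving all modes and the vacuum. -/
def VertexAlgebra.IsHom {V W : Type} [AddCommGroup V] [Module ℂ V] [AddCommGroup W]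
    [Module ℂ W] (VA : VertexAlgebra V) (WA : VertexAlgebra W) (f : V →ₗ[ℂ] W) : Prop :=
  f VA.one = WA.one ∧ ∀ (u v : V) (n : ℤ), f (VA.mode u n v) = WA.mode (f u) n (f v)

/-- A vertex operator algebra: a `ℤ`-graded vertex algebra with finite-dimensional
pieces, grading bounded below, and a conformal vector `ω` whose modes `L(n) = ω_{n+1}`
satisfy the Virasoro relations, give the grading by `L(0)`, and realize `L(-1) = 𝒟`. -/
structure VertexOperatorAlgebra (V : Type) [AddCommGroup V] [Module ℂ V]
    extends VertexAlgebra V where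
  grade : ℤ → Submodule ℂ V
  internal : DirectSum.IsInternal grade
  one_mem : one ∈ grade 0
  mode_grade : ∀ {k m n : ℤ} {u w : V}, u ∈ grade k → w ∈ grade n →
    mode u m w ∈ grade (k + n - m - 1)
  fin_dim : ∀ n : ℤ, FiniteDimensional ℂ (grade n)
  bounded_below : ∃ n₀ : ℤ, ∀ n < n₀, grade n = ⊥
  omega : V
  omega_mem : omega ∈ grade 2
  central_charge : ℂ
  virasoro : ∀ (m n : ℤ) (v : V),
    mode omega (m + 1) (mode omega (n + 1) v) - mode omega (n + 1) (mode omega (m + 1) v) =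
      ((m : ℂ) - (n : ℂ)) • mode omega (m + n + 1) v +
        (if m + n = 0 then (((m : ℂ) ^ 3 - (m : ℂ)) / 12) * central_charge else 0) • v
  L0_grading : ∀ (n : ℤ) (v : V), v ∈ grade n → mode omega 1 v = (n : ℂ) • v
  L_neg1 : ∀ v : V, mode omega 0 v = mode v (-2) one

open Filter

theorem zchoose_zero_right (p : ℤ) : zchoose p 0 = 1 := by
  simp [zchoose]

theorem zchoose_zero_left_of_ne_zero {i : ℕ} (hi : i ≠ 0) : zchoose 0 i = 0 := by
  rw [zchoose, Finset.prod_eq_zero (Finset.mem_range.2 (Nat.pos_of_ne_zero hi)) (by simp),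
    zero_div]

theorem zchoose_neg_two (i : ℕ) : zchoose (-2) i = (-1) ^ i * ((i : ℂ) + 1) := by
  have hprod (n : ℕ) :
      ∏ j ∈ Finset.range n, (((-2 : ℤ) : ℂ) - j) = (-1) ^ n * (n + 1).factorial := by
    induction n with
    | zero => simp
    | succ n ih =>
      rw [Finset.prod_range_succ, ih, Nat.factorial_succ (n + 1)]
      push_cast
      ring
  rw [zchoose, hprod, Nat.factorial_succ]
  have : (i.factorial : ℂ) ≠ 0 := Nat.cast_ne_zero.2 i.factorial_ne_zero
  push_cast
  field_simp

theorem Submodule.finsum_mem {R M ι : Type*} [Semiring R] [AddCommMonoid M] [Module R M]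
    (p : Submodule R M) {f : ι → M} (hf : ∀ i, f i ∈ p) : ∑ᶠ i, f i ∈ p :=
  finsum_induction (· ∈ p) p.zero_mem (fun _ _ => p.add_mem) hf

theorem SModEq.mem_iff {R M : Type*} [Ring R] [AddCommGroup M] [Module R M] {U : Submodule R M}
    {x y : M} (h : x ≡ y [SMOD U]) : x ∈ U ↔ y ∈ U := by
  rw [← SModEq.zero, ← SModEq.zero]
  exact ⟨h.symm.trans, h.trans⟩

namespace VertexAlgebra

variable {V : Type} [AddCommGroup V] [Module ℂ V] (VA : VertexAlgebra V)

@[simps]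
def modeRight (u : V) (n : ℤ) : V →ₗ[ℂ] V where
  toFun := VA.mode u n
  map_add' := VA.mode_add_right u n
  map_smul' c := VA.mode_smul_right u n c

@[simps]
def modeLeft (n : ℤ) (w : V) : V →ₗ[ℂ] V where
  toFun u := VA.mode u n w
  map_add' u v := VA.mode_add_left u v n w
  map_smul' c u := VA.mode_smul_left c u n w

@[simp]
theorem mode_zero_right (u : V) (n : ℤ) : VA.mode u n 0 = 0 :=
  (VA.modeRight u n).map_zero

theorem commutator_formula (u v w : V) (p q : ℤ) :
    VA.mode u p (VA.mode v q w) - VA.mode v q (VA.mode u p w) =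
      ∑ᶠ i : ℕ, zchoose p i • VA.mode (VA.mode u i v) (p + q - i) w := by
  have h := VA.borcherds u v w p q 0
  conv_rhs at h =>
    rw [finsum_eq_single _ 0 fun i hi => by simp [zchoose_zero_left_of_ne_zero hi]]
  simpa [zchoose_zero_right] using h.symm

theorem iterate_formula (u v w : V) (r q : ℤ) :
    VA.mode (VA.mode u r v) q w =
      ∑ᶠ i : ℕ, ((-1 : ℂ) ^ i * zchoose r i) •
        (VA.mode u (r - i) (VA.mode v (q + i) w) -
          ((-1 : ℂ) ^ r) • VA.mode v (q + r - i) (VA.mode u i w)) := by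
  have h := VA.borcherds u v w 0 q r
  rw [finsum_eq_single _ 0 fun i hi => by simp [zchoose_zero_left_of_ne_zero hi]] at h
  simpa [zchoose_zero_right] using h

theorem mode_D_neg_one_sub (x w : V) (k : ℕ) :
    VA.mode (VA.D x) (-1 - k) w = ((k : ℂ) + 1) • VA.mode x (-2 - k) w := by
  rw [D, iterate_formula, finsum_eq_single _ k]
  · rw [VA.vacuum_left, if_pos (by ring), VA.vacuum_left, if_neg (by omega), smul_zero, sub_zero,
      zchoose_neg_two, ← mul_assoc, ← pow_add, Even.neg_one_pow ⟨k, rfl⟩, one_mul]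
  · intro i hi
    rw [VA.vacuum_left, if_neg (by omega), VA.vacuum_left, if_neg (by omega)]
    simp

theorem mode_mem_C2_of_le_neg_two (u w : V) {n : ℤ} (hn : n ≤ -2) : VA.mode u n w ∈ VA.C2 := by
  obtain ⟨k, rfl⟩ : ∃ k : ℕ, n = -2 - k := ⟨(-2 - n).toNat, by omega⟩
  induction k generalizing u with
  | zero => exact Submodule.subset_span ⟨u, w, by simp⟩
  | succ k ih =>
    have hk : ((k + 1 : ℕ) : ℂ) + 1 ≠ 0 := by exact_mod_cast (by omega : k + 1 + 1 ≠ 0)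
    have h := VA.mode_D_neg_one_sub u w (k + 1)
    rw [show (-1 : ℤ) - (k + 1 : ℕ) = -2 - k by push_cast; ring] at h
    rw [← VA.C2.smul_mem_iff hk, ← h]
    exact ih (VA.D u) (by omega)

theorem C2_le_comap_modeRight (u : V) {n : ℤ} (hn : n ≤ 0) :
    VA.C2 ≤ VA.C2.comap (VA.modeRight u n) := by
  refine Submodule.span_le.2 ?_
  rintro _ ⟨s, t, rfl⟩
  have h := VA.commutator_formula u s t n (-2)
  rw [sub_eq_iff_eq_add] at h
  simp only [SetLike.mem_coe, Submodule.mem_comap, modeRight_apply, h]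
  exact VA.C2.add_mem (VA.C2.finsum_mem fun i => VA.C2.smul_mem _
    (VA.mode_mem_C2_of_le_neg_two _ _ (by omega))) (Submodule.subset_span ⟨s, _, rfl⟩)

theorem C2_le_comap_modeLeft (w : V) {n : ℤ} (hn : n ≤ 0) :
    VA.C2 ≤ VA.C2.comap (VA.modeLeft n w) := by
  refine Submodule.span_le.2 ?_
  rintro _ ⟨s, t, rfl⟩
  simp only [SetLike.mem_coe, Submodule.mem_comap, modeLeft_apply, iterate_formula]
  exact VA.C2.finsum_mem fun i => VA.C2.smul_mem _ (VA.C2.sub_mem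
    (VA.mode_mem_C2_of_le_neg_two _ _ (by omega))
    (VA.C2.smul_mem _ (VA.mode_mem_C2_of_le_neg_two _ _ (by omega))))

theorem mode_mem_C2_of_mem_right (u : V) {n : ℤ} (hn : n ≤ 0) {x : V} (hx : x ∈ VA.C2) :
    VA.mode u n x ∈ VA.C2 :=
  VA.C2_le_comap_modeRight u hn hx

theorem mode_mem_C2_of_mem_left (w : V) {n : ℤ} (hn : n ≤ 0) {x : V} (hx : x ∈ VA.C2) :
    VA.mode x n w ∈ VA.C2 :=
  VA.C2_le_comap_modeLeft w hn hx

theorem mode_smodEq_mode_right (u : V) {n : ℤ} (hn : n ≤ 0) {x y : V}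
    (h : x ≡ y [SMOD VA.C2]) : VA.mode u n x ≡ VA.mode u n y [SMOD VA.C2] :=
  (h.map (VA.modeRight u n)).mono
    (Submodule.map_le_iff_le_comap.2 (VA.C2_le_comap_modeRight u hn))

theorem mode_smodEq_mode_swap (u v : V) (n : ℤ) :
    VA.mode u n v ≡ (-1 : ℂ) ^ (n + 1) • VA.mode v n u [SMOD VA.C2] := by
  -- Borcherds at `w = 𝟙`, `p = q = -1`: the left side lies in `C₂(V)`, the right side collapses.
  have h := VA.borcherds u v VA.one (-1) (-1) (n + 1)
  conv_rhs at h => rw [finsum_eq_single _ 0 fun i hi => by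
    rw [VA.creation_nonneg _ _ (by omega), VA.creation_nonneg _ _ (by omega)]
    simp]
  simp only [CharP.cast_eq_zero, add_zero, sub_zero, pow_zero, zchoose_zero_right, one_mul,
    one_smul, show -1 + (n + 1) = n by ring, VA.creation] at h
  rw [SModEq.sub_mem, ← h]
  exact VA.C2.finsum_mem fun i => VA.C2.smul_mem _ (VA.mode_mem_C2_of_le_neg_two _ _ (by omega))

theorem mode_mem_iff_mode_swap_mem {M : Submodule ℂ V} (hC2 : VA.C2 ≤ M) (u v : V) (n : ℤ) :
    VA.mode u n v ∈ M ↔ VA.mode v n u ∈ M := by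
  rw [((VA.mode_smodEq_mode_swap u v n).mono hC2).mem_iff,
    M.smul_mem_iff (zpow_ne_zero _ (by norm_num))]

theorem mode_zero_self_mem_C2 (a : V) : VA.mode a 0 a ∈ VA.C2 := by
  have h := VA.mode_smodEq_mode_swap a a 0
  rw [SModEq.sub_mem] at h
  have h2 : VA.mode a 0 a =
      (2 : ℂ)⁻¹ • (VA.mode a 0 a - (-1 : ℂ) ^ (0 + 1 : ℤ) • VA.mode a 0 a) := by
    module
  rw [h2]
  exact VA.C2.smul_mem _ h

theorem mode_neg_one_comm_smodEq (u v w : V) :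
    VA.mode u (-1) (VA.mode v (-1) w) ≡ VA.mode v (-1) (VA.mode u (-1) w) [SMOD VA.C2] := by
  rw [SModEq.sub_mem, commutator_formula]
  exact VA.C2.finsum_mem fun i => VA.C2.smul_mem _ (VA.mode_mem_C2_of_le_neg_two _ _ (by omega))

theorem mode_zero_mode_neg_one (b a y : V) :
    VA.mode b 0 (VA.mode a (-1) y) =
      VA.mode (VA.mode b 0 a) (-1) y + VA.mode a (-1) (VA.mode b 0 y) := by
  rw [← sub_eq_iff_eq_add, commutator_formula,
    finsum_eq_single _ 0 fun i hi => by rw [zchoose_zero_left_of_ne_zero hi, zero_smul]]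
  simp [zchoose_zero_right]

@[simp]
theorem pow_zero_eq (a : V) : VA.pow a 0 = VA.one := rfl

theorem pow_succ_eq (a : V) (t : ℕ) : VA.pow a (t + 1) = VA.mode a (-1) (VA.pow a t) := rfl

@[simp]
theorem word_cons (a : V) (n : ℤ) (ns : List ℤ) :
    VA.word a (n :: ns) = VA.mode a n (VA.word a ns) := rfl

theorem mode_zero_pow_succ_smodEq (b a : V) (t : ℕ) :
    VA.mode b 0 (VA.pow a (t + 1)) ≡
      ((t : ℂ) + 1) • VA.mode (VA.mode b 0 a) (-1) (VA.pow a t) [SMOD VA.C2] := by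
  induction t with
  | zero => simp [pow_succ_eq, VA.creation]
  | succ t ih =>
    set c := VA.mode b 0 a
    calc VA.mode b 0 (VA.pow a (t + 1 + 1))
        = VA.mode c (-1) (VA.pow a (t + 1)) + VA.mode a (-1) (VA.mode b 0 (VA.pow a (t + 1))) :=
          VA.mode_zero_mode_neg_one b a _
      _ ≡ VA.mode c (-1) (VA.pow a (t + 1)) +
            ((t : ℂ) + 1) • VA.mode a (-1) (VA.mode c (-1) (VA.pow a t)) [SMOD VA.C2] := by
          rw [← VA.mode_smul_right]
          exact SModEq.rfl.add (VA.mode_smodEq_mode_right a (by norm_num) ih)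
      _ ≡ VA.mode c (-1) (VA.pow a (t + 1)) +
            ((t : ℂ) + 1) • VA.mode c (-1) (VA.pow a (t + 1)) [SMOD VA.C2] :=
          SModEq.rfl.add ((VA.mode_neg_one_comm_smodEq a c _).smul _)
      _ = (((t + 1 : ℕ) : ℂ) + 1) • VA.mode c (-1) (VA.pow a (t + 1)) := by
          push_cast
          module

theorem mode_zero_pow_succ_self_mem_C2 (a : V) (t : ℕ) :
    VA.mode a 0 (VA.pow a (t + 1)) ∈ VA.C2 :=
  (VA.mode_zero_pow_succ_smodEq a a t).mem_iff.2
    (VA.C2.smul_mem _ (VA.mode_mem_C2_of_mem_left _ (by norm_num) (VA.mode_zero_self_mem_C2 a)))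

theorem word_replicate_neg_one (a : V) (k : ℕ) :
    VA.word a (List.replicate k (-1)) = VA.pow a (k + 1) := by
  induction k with
  | zero => exact (VA.creation a).symm
  | succ k ih => rw [List.replicate_succ, word_cons, ih]; rfl

theorem word_mem_C2_or_eq_pow (a : V) {ns : List ℤ} (hns : GoodIdx ns) :
    VA.word a ns ∈ VA.C2 ∨ VA.word a ns = VA.pow a (ns.length + 1) := by
  induction ns with
  | nil => exact Or.inr (VA.creation a).symm
  | cons n ns ih =>
    rw [word_cons, List.length_cons]
    have hn := hns n List.mem_cons_self
    rcases ih fun m hm => hns m (List.mem_cons_of_mem _ hm) with hC2 | hpow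
    · exact Or.inl (VA.mode_mem_C2_of_mem_right a (by omega) hC2)
    · rw [hpow]
      rcases hn with rfl | rfl
      · exact Or.inl (VA.mode_zero_pow_succ_self_mem_C2 a _)
      · exact Or.inr rfl

theorem exists_forall_word_iff_eventually_pow {P : V → Prop} (hP : ∀ x ∈ VA.C2, P x) (a : V) :
    (∃ m : ℕ, ∀ ns : List ℤ, GoodIdx ns → m ≤ ns.length → P (VA.word a ns)) ↔
      ∀ᶠ t in atTop, P (VA.pow a t) := by
  rw [eventually_atTop]
  constructor
  · rintro ⟨m, hm⟩
    refine ⟨m + 1, fun t ht => ?_⟩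
    obtain ⟨k, rfl⟩ : ∃ k, t = k + 1 := ⟨t - 1, by omega⟩
    rw [← word_replicate_neg_one]
    exact hm _ (fun n hn => Or.inr (List.eq_of_mem_replicate hn))
      (by rw [List.length_replicate]; omega)
  · rintro ⟨m, hm⟩
    refine ⟨m, fun ns hns hlen => ?_⟩
    rcases VA.word_mem_C2_or_eq_pow a hns with hC2 | hpow
    · exact hP _ hC2
    · exact hpow ▸ hm _ (by omega)

variable {VA} {M : Submodule ℂ V}

theorem mem_rad_iff (hC2 : VA.C2 ≤ M) (a : V) :
    a ∈ VA.rad (M : Set V) ↔ ∀ᶠ t in atTop, VA.pow a t ∈ M :=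
  VA.exists_forall_word_iff_eventually_pow (P := (· ∈ M)) hC2 a

theorem rsrad_eq_lsrad (hC2 : VA.C2 ≤ M) : VA.rsrad (M : Set V) = VA.lsrad M := by
  ext a
  simp only [rsrad, lsrad, Set.mem_ofPred_eq, SetLike.mem_coe]
  exact forall_congr' fun b => exists_congr fun m => forall₂_congr fun ns s => by
    rw [VA.mode_mem_iff_mode_swap_mem hC2 (VA.word a ns)]

theorem eventually_mode_zero_pow_mem (hC2 : VA.C2 ≤ M) {a b : V}
    (h : ∀ᶠ t in atTop, VA.mode (VA.mode b 0 a) (-1) (VA.pow a t) ∈ M) :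
    ∀ᶠ t in atTop, VA.mode b 0 (VA.pow a t) ∈ M := by
  rw [← map_add_atTop_eq_nat 1, eventually_map]
  filter_upwards [h] with t ht
  exact ((VA.mode_zero_pow_succ_smodEq b a t).mono hC2).mem_iff.2 (M.smul_mem _ ht)

theorem mem_lsrad_iff (hC2 : VA.C2 ≤ M) (a : V) :
    a ∈ VA.lsrad (M : Set V) ↔ ∀ b : V, ∀ᶠ t in atTop, VA.mode b (-1) (VA.pow a t) ∈ M := by
  have hword (b : V) := VA.exists_forall_word_iff_eventually_pow
    (P := fun x => VA.mode b 0 x ∈ M ∧ VA.mode b (-1) x ∈ M)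
    (fun x hx => ⟨hC2 (VA.mode_mem_C2_of_mem_right b le_rfl hx),
      hC2 (VA.mode_mem_C2_of_mem_right b (by norm_num) hx)⟩) a
  have hlsrad : a ∈ VA.lsrad (M : Set V) ↔ ∀ b : V, ∃ m : ℕ, ∀ ns : List ℤ, GoodIdx ns →
      m ≤ ns.length → VA.mode b 0 (VA.word a ns) ∈ M ∧ VA.mode b (-1) (VA.word a ns) ∈ M :=
    forall_congr' fun b => exists_congr fun m =>
      ⟨fun h ns hns hm => ⟨h ns 0 hns hm (.inl rfl), h ns (-1) hns hm (.inr rfl)⟩,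
        fun h ns s hns hm hs => by
          rcases hs with rfl | rfl
          exacts [(h ns hns hm).1, (h ns hns hm).2]⟩
  simp only [hlsrad, hword, eventually_and]
  exact ⟨fun h b => (h b).2, fun h b => ⟨eventually_mode_zero_pow_mem hC2 (h _), h b⟩⟩

theorem mem_srad_iff (hC2 : VA.C2 ≤ M) (a : V) :
    a ∈ VA.srad (M : Set V) ↔ ∀ b : V, ∀ᶠ t in atTop, VA.mode b (-1) (VA.pow a t) ∈ M := by
  rw [srad, rsrad_eq_lsrad hC2, Set.inter_self, mem_lsrad_iff hC2]

end VertexAlgebra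

theorem Nat.eventually_atTop_iff_exists_one_le {P : ℕ → Prop} :
    (∀ᶠ t in atTop, P t) ↔ ∃ m : ℕ, 1 ≤ m ∧ ∀ t : ℕ, m ≤ t → P t :=
  eventually_atTop.trans
    ⟨fun ⟨m, h⟩ => ⟨m + 1, by omega, fun t ht => h t (by omega)⟩, fun ⟨m, _, h⟩ => ⟨m, h⟩⟩

/- `V/C₂(V)` is handled through representatives: for `M ⊇ C₂(V)`,
`x + C₂(V) ∈ M/C₂(V) ↔ x ∈ M`, and the product of `V/C₂(V)` is induced by the `(-1)`-product,
so `a^t` and `b·a^t` are represented by `VA.pow a t` and `VA.mode b (-1) (VA.pow a t)`. -/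
/-- Let `M ⊇ C₂(V)`. Since the commutative algebra `V/C₂(V)` has product
induced by the (-1)-th product and, for `M ⊇ C₂(V)`, `x + C₂(V) ∈ M/C₂(V) ↔ x ∈ M`, the
conditions `a + C₂(V) ∈ r(M/C₂(V))`, `a + C₂(V) ∈ sr(M/C₂(V))`, and `M/C₂(V)` being a
Mathieu-Zhao subspace of `V/C₂(V)` are expressed below via representatives and the
(-1)-power `pow`. Then: (1) `a ∈ r_{0,-1}(M)` iff `a + C₂(V) ∈ r(M/C₂(V))`;
(2) `a ∈ sr_{0,-1}(M)` iff `a + C₂(V) ∈ sr(M/C₂(V))`; consequently `M` is a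
MZ_{0,-1}-subspace of `V` iff `M/C₂(V)` is a Mathieu-Zhao subspace of `V/C₂(V)`. -/
theorem stmt13 {V : Type} [AddCommGroup V] [Module ℂ V] (VA : VertexAlgebra V)
    (M : Submodule ℂ V) (hC2 : VA.C2 ≤ M) :
    (∀ a : V, a ∈ VA.rad (M : Set V) ↔
      ∃ m : ℕ, 1 ≤ m ∧ ∀ t : ℕ, m ≤ t → VA.pow a t ∈ M) ∧
    (∀ a : V, a ∈ VA.srad (M : Set V) ↔
      ∀ b : V, ∃ m : ℕ, 1 ≤ m ∧ ∀ t : ℕ, m ≤ t → VA.mode b (-1) (VA.pow a t) ∈ M) ∧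
    (VA.IsMZ (M : Set V) ↔
      ∀ a : V, (∃ m : ℕ, 1 ≤ m ∧ ∀ t : ℕ, m ≤ t → VA.pow a t ∈ M) ↔
        (∀ b : V, ∃ m : ℕ, 1 ≤ m ∧ ∀ t : ℕ, m ≤ t → VA.mode b (-1) (VA.pow a t) ∈ M)) := by
  have hrad (a : V) :=
    (VertexAlgebra.mem_rad_iff hC2 a).trans Nat.eventually_atTop_iff_exists_one_le
  have hsrad (a : V) := (VertexAlgebra.mem_srad_iff hC2 a).trans
    (forall_congr' fun _ => Nat.eventually_atTop_iff_exists_one_le)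
  exact ⟨hrad, hsrad, Set.ext_iff.trans (forall_congr' fun a => iff_congr (hrad a) (hsrad a))⟩
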